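/- arXiv:1801.08016 — 5 statements merged into one kernel-verified Lean document; each statement's English description precedes it below -/
import Mathlib

section
/- Let $A_1, A_2, A_3$ be three non-collinear points in $\mathbb{R}^2$ with positive weights $w_1, w_2, w_3$, and let $O \notin \{A_1, A_2, A_3\}$ be a point satisfying $\sum_{i=1}^3 w_i \, u(O, A_i) = 0$, where $u(O, A_i) = (A_i - O)/\|A_i - O\|$. Then $O$ minimizes $f(P) = \sum_{i=1}^3 w_i \|P - A_i\|$ over all $P \in \mathbb{R}^2$. -/
open Real EuclideanGeometry

noncomputable def u (X Y : EuclideanSpace ℝ (Fin 2)) : EuclideanSpace ℝ (Fin 2) :=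
  ‖Y - X‖⁻¹ • (Y - X)

/-! The unit vector `‖A - O‖⁻¹ • (A - O)` is a subgradient of `P ↦ ‖A - P‖` at `O` (and so is `0`,
its junk value at `O = A`). Hence `∑ wᵢ • u(O, Aᵢ)` is a subgradient of the convex function
`f = ∑ wᵢ ‖· - Aᵢ‖` at `O`, and when it vanishes `O` is a global minimizer of `f`. -/

section InnerProductSpace

variable {E : Type*} [NormedAddCommGroup E] [InnerProductSpace ℝ E]

theorem norm_sub_add_inner_unit_le (A O P : E) :
    ‖A - O‖ + inner ℝ (‖A - O‖⁻¹ • (A - O)) (O - P) ≤ ‖A - P‖ := by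
  set v := ‖A - O‖⁻¹ • (A - O)
  have h_self : inner ℝ v (A - O) = ‖A - O‖ := by
    rw [real_inner_smul_left, real_inner_self_eq_norm_sq]
    rcases eq_or_ne ‖A - O‖ 0 with h | h
    · simp [h]
    · field_simp
  have h_unit : ‖v‖ ≤ 1 := by
    rw [norm_smul, norm_inv, norm_norm]
    exact inv_mul_le_one
  calc ‖A - O‖ + inner ℝ v (O - P) = inner ℝ v (A - P) := by
        rw [← h_self, ← inner_add_right, sub_add_sub_cancel]
    _ ≤ ‖v‖ * ‖A - P‖ := real_inner_le_norm _ _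
    _ ≤ ‖A - P‖ := mul_le_of_le_one_left (norm_nonneg _) h_unit

theorem sum_mul_norm_sub_le_of_sum_smul_unit_eq_zero {ι : Type*} (s : Finset ι)
    (w : ι → ℝ) (A : ι → E) (O : E) (hw : ∀ i ∈ s, 0 ≤ w i)
    (hbal : ∑ i ∈ s, w i • (‖A i - O‖⁻¹ • (A i - O)) = 0) (P : E) :
    ∑ i ∈ s, w i * ‖O - A i‖ ≤ ∑ i ∈ s, w i * ‖P - A i‖ := by
  have h_inner : ∑ i ∈ s, w i * inner ℝ (‖A i - O‖⁻¹ • (A i - O)) (O - P) = 0 := by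
    simpa [sum_inner, real_inner_smul_left] using congrArg (inner ℝ · (O - P)) hbal
  calc ∑ i ∈ s, w i * ‖O - A i‖
      = ∑ i ∈ s, w i * (‖A i - O‖ + inner ℝ (‖A i - O‖⁻¹ • (A i - O)) (O - P)) := by
        simp only [mul_add, Finset.sum_add_distrib, h_inner, add_zero]
        simp only [norm_sub_rev (A _) O]
    _ ≤ ∑ i ∈ s, w i * ‖P - A i‖ := by
        refine Finset.sum_le_sum fun i hi => mul_le_mul_of_nonneg_left ?_ (hw i hi)
        simpa only [norm_sub_rev P] using norm_sub_add_inner_unit_le (A i) O P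

end InnerProductSpace

theorem floating_balance_minimizes_general
    (A₁ A₂ A₃ O : EuclideanSpace ℝ (Fin 2)) (w₁ w₂ w₃ : ℝ)
    (hw₁ : 0 < w₁) (hw₂ : 0 < w₂) (hw₃ : 0 < w₃)
    (hbal : w₁ • u O A₁ + w₂ • u O A₂ + w₃ • u O A₃ = 0) :
    ∀ P : EuclideanSpace ℝ (Fin 2),
      w₁ * ‖O - A₁‖ + w₂ * ‖O - A₂‖ + w₃ * ‖O - A₃‖ ≤
      w₁ * ‖P - A₁‖ + w₂ * ‖P - A₂‖ + w₃ * ‖P - A₃‖ := by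
  intro P
  have hw : ∀ i ∈ Finset.univ, 0 ≤ ![w₁, w₂, w₃] i := by
    intro i _
    fin_cases i <;> simp [hw₁.le, hw₂.le, hw₃.le]
  simpa [Fin.sum_univ_three] using
    sum_mul_norm_sub_le_of_sum_smul_unit_eq_zero Finset.univ ![w₁, w₂, w₃] ![A₁, A₂, A₃] O hw
      (by simpa [Fin.sum_univ_three, u] using hbal) P

theorem floating_balance_minimizes
    (A₁ A₂ A₃ O : EuclideanSpace ℝ (Fin 2)) (w₁ w₂ w₃ : ℝ)
    (hw₁ : 0 < w₁) (hw₂ : 0 < w₂) (hw₃ : 0 < w₃)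
    (hnc : ¬ Collinear ℝ ({A₁, A₂, A₃} : Set (EuclideanSpace ℝ (Fin 2))))
    (hO : O ∉ ({A₁, A₂, A₃} : Set (EuclideanSpace ℝ (Fin 2))))
    (hbal : w₁ • u O A₁ + w₂ • u O A₂ + w₃ • u O A₃ = 0) :
    ∀ P : EuclideanSpace ℝ (Fin 2),
      w₁ * ‖O - A₁‖ + w₂ * ‖O - A₂‖ + w₃ * ‖O - A₃‖ ≤
      w₁ * ‖P - A₁‖ + w₂ * ‖P - A₂‖ + w₃ * ‖P - A₃‖ :=
  floating_balance_minimizes_general A₁ A₂ A₃ O w₁ w₂ w₃ hw₁ hw₂ hw₃ hbal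
end

section
/- Let $A_1, A_2, A_3$ be three non-collinear points in $\mathbb{R}^2$ with positive weights $w_1, w_2, w_3$. If $\|w_2 u(A_1, A_2) + w_3 u(A_1, A_3)\| \le w_1$, then $A_1$ minimizes $f(P) = \sum_{i=1}^3 w_i \|P - A_i\|$ over all $P \in \mathbb{R}^2$ (the absorbed case). -/
/-!
The absorbed condition says that `0` lies in the subdifferential of `f` at `A₁`. Concretely,
`z ↦ ‖z - Y‖` is convex with subgradient `-u(A₁, Y)` at `A₁`, so with `v = w₂ u(A₁,A₂) + w₃ u(A₁,A₃)`
we get `f P - f A₁ ≥ w₁ ‖P - A₁‖ - ⟪v, P - A₁⟫ ≥ (w₁ - ‖v‖) ‖P - A₁‖ ≥ 0` by Cauchy–Schwarz.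
-/

open Real EuclideanGeometry

open scoped InnerProductSpace

section UnitVector

variable {E : Type*} [NormedAddCommGroup E] [InnerProductSpace ℝ E]

theorem norm_inv_norm_smul_le_one (x : E) : ‖‖x‖⁻¹ • x‖ ≤ 1 := by
  rcases eq_or_ne x 0 with rfl | hx
  · simp
  · exact (norm_smul_inv_norm hx).le

theorem real_inner_inv_norm_smul_self (x : E) : ⟪‖x‖⁻¹ • x, x⟫_ℝ = ‖x‖ := by
  rcases eq_or_ne x 0 with rfl | hx
  · simp
  · rw [real_inner_smul_left, real_inner_self_eq_norm_sq]
    field_simp [norm_ne_zero_iff.mpr hx]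

theorem norm_sub_le_norm_sub_add_inner_unit (x y p : E) :
    ‖x - y‖ ≤ ‖p - y‖ + ⟪‖y - x‖⁻¹ • (y - x), p - x⟫_ℝ := by
  set e := ‖y - x‖⁻¹ • (y - x)
  have hsplit : ‖y - x‖ = ⟪e, y - p⟫_ℝ + ⟪e, p - x⟫_ℝ := by
    rw [← inner_add_right, sub_add_sub_cancel, real_inner_inv_norm_smul_self]
  have hcs : ⟪e, y - p⟫_ℝ ≤ ‖y - p‖ :=
    (real_inner_le_norm _ _).trans
      (mul_le_of_le_one_left (norm_nonneg _) (norm_inv_norm_smul_le_one _))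
  rw [norm_sub_rev x y, norm_sub_rev p y]
  linarith

end UnitVector

theorem absorbed_case_minimizes_general
    (A₁ A₂ A₃ : EuclideanSpace ℝ (Fin 2)) (w₁ w₂ w₃ : ℝ)
    (hw₂ : 0 < w₂) (hw₃ : 0 < w₃)
    (habs : ‖w₂ • u A₁ A₂ + w₃ • u A₁ A₃‖ ≤ w₁) :
    ∀ P : EuclideanSpace ℝ (Fin 2),
      w₁ * ‖A₁ - A₁‖ + w₂ * ‖A₁ - A₂‖ + w₃ * ‖A₁ - A₃‖ ≤
      w₁ * ‖P - A₁‖ + w₂ * ‖P - A₂‖ + w₃ * ‖P - A₃‖ := by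
  intro P
  have h₂ : ‖A₁ - A₂‖ ≤ ‖P - A₂‖ + ⟪u A₁ A₂, P - A₁⟫_ℝ :=
    norm_sub_le_norm_sub_add_inner_unit A₁ A₂ P
  have h₃ : ‖A₁ - A₃‖ ≤ ‖P - A₃‖ + ⟪u A₁ A₃, P - A₁⟫_ℝ :=
    norm_sub_le_norm_sub_add_inner_unit A₁ A₃ P
  have hv : ⟪w₂ • u A₁ A₂ + w₃ • u A₁ A₃, P - A₁⟫_ℝ ≤ w₁ * ‖P - A₁‖ :=
    (real_inner_le_norm _ _).trans (mul_le_mul_of_nonneg_right habs (norm_nonneg _))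
  rw [inner_add_left, real_inner_smul_left, real_inner_smul_left] at hv
  rw [sub_self, norm_zero, mul_zero, zero_add]
  linarith [mul_le_mul_of_nonneg_left h₂ hw₂.le, mul_le_mul_of_nonneg_left h₃ hw₃.le]

theorem absorbed_case_minimizes
    (A₁ A₂ A₃ : EuclideanSpace ℝ (Fin 2)) (w₁ w₂ w₃ : ℝ)
    (hw₁ : 0 < w₁) (hw₂ : 0 < w₂) (hw₃ : 0 < w₃)
    (hnc : ¬ Collinear ℝ ({A₁, A₂, A₃} : Set (EuclideanSpace ℝ (Fin 2))))
    (habs : ‖w₂ • u A₁ A₂ + w₃ • u A₁ A₃‖ ≤ w₁) :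
    ∀ P : EuclideanSpace ℝ (Fin 2),
      w₁ * ‖A₁ - A₁‖ + w₂ * ‖A₁ - A₂‖ + w₃ * ‖A₁ - A₃‖ ≤
      w₁ * ‖P - A₁‖ + w₂ * ‖P - A₂‖ + w₃ * ‖P - A₃‖ :=
  absorbed_case_minimizes_general A₁ A₂ A₃ w₁ w₂ w₃ hw₂ hw₃ habs
end

section
/- Let $A_4$ be the midpoint of segment $A_2 A_3$ in an isosceles triangle with apex $A_1$ ($\|A_1 - A_2\| = \|A_1 - A_3\|$), weights $w_1 = 1$, $w_2 = w_3 = w$ with $1/2 < w$, and suppose $O$ lies strictly between $A_1$ and $A_4$ on the altitude and satisfies $u(O,A_1) + w\,u(O,A_2) + w\,u(O,A_3) = 0$. Then $\cos(\angle A_4 O A_3) = 1/(2w)$, i.e., $\langle u(O,A_4), u(O,A_3)\rangle = 1/(2w)$, equivalently $\angle A_4 O A_3 = \tfrac{1}{2}\arccos\big(\tfrac{1}{2w^2} - 1\big)$. -/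
open Real EuclideanGeometry

set_option maxHeartbeats 1000000 in
theorem angle_at_weighted_fermat_point
    (A₁ A₂ A₃ O : EuclideanSpace ℝ (Fin 2)) (w : ℝ) (hw : 1 / 2 < w)
    (hnc : ¬ Collinear ℝ ({A₁, A₂, A₃} : Set (EuclideanSpace ℝ (Fin 2))))
    (hiso : ‖A₁ - A₂‖ = ‖A₁ - A₃‖)
    (A₄ : EuclideanSpace ℝ (Fin 2)) (hA₄ : A₄ = midpoint ℝ A₂ A₃)
    (hbtw : Sbtw ℝ A₁ O A₄)
    (hbal : u O A₁ + w • u O A₂ + w • u O A₃ = 0) :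
    (inner ℝ (u O A₄) (u O A₃) : ℝ) = 1 / (2 * w) ∧
      ∠ A₄ O A₃ = arccos (1 / (2 * w ^ 2) - 1) / 2 := by
  have hw0 : (0:ℝ) < w := by linarith
  obtain ⟨t, ht, hOt⟩ := hbtw.mem_image_Ioo
  obtain ⟨ht0, ht1⟩ := ht
  set s : ℝ := 1 - t with hs_def
  have hs : 0 < s := by simp [hs_def]; linarith
  set v : EuclideanSpace ℝ (Fin 2) := A₄ - A₁ with hv_def
  set m : EuclideanSpace ℝ (Fin 2) := A₃ - A₄ with hm_def
  have hv0 : v ≠ 0 := sub_ne_zero.mpr hbtw.left_ne_right.symm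
  have hnv : 0 < ‖v‖ := norm_pos_iff.mpr hv0
  -- midpoint rewriting
  have hA2 : A₂ = A₄ + A₄ - A₃ := by
    rw [hA₄, midpoint_eq_smul_add, invOf_eq_inv]
    have : ((2:ℝ)⁻¹ • (A₂ + A₃) : EuclideanSpace ℝ (Fin 2)) + (2:ℝ)⁻¹ • (A₂ + A₃) = A₂ + A₃ := by
      rw [← add_smul]; norm_num
    rw [this]; abel
  -- betweenness vectors
  have hO4 : A₄ - O = s • v := by
    rw [← hOt, AffineMap.lineMap_apply_module, hs_def, hv_def]; module
  have hO1 : A₁ - O = (-t) • v := by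
    rw [← hOt, AffineMap.lineMap_apply_module, hv_def]; module
  have hO3 : A₃ - O = m + s • v := by
    rw [hm_def, ← hO4]; abel
  have hO2 : A₂ - O = -m + s • v := by
    rw [hm_def, ← hO4, hA2]; abel
  -- perpendicularity
  have hvm : (inner ℝ v m : ℝ) = 0 := by
    have h1 : (inner ℝ (A₁ - A₂) (A₁ - A₂) : ℝ) = inner ℝ (A₁ - A₃) (A₁ - A₃) := by
      rw [real_inner_self_eq_norm_mul_norm, real_inner_self_eq_norm_mul_norm, hiso]
    have e2 : A₁ - A₂ = m - v := by rw [hm_def, hv_def, hA2]; abel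
    have e3 : A₁ - A₃ = -m - v := by rw [hm_def, hv_def]; abel
    rw [e2, e3] at h1
    simp only [inner_sub_left, inner_sub_right, inner_neg_left, inner_neg_right] at h1
    have hc := real_inner_comm v m
    linarith
  -- norms
  have hd : ‖A₄ - O‖ = s * ‖v‖ := by
    rw [hO4, norm_smul, Real.norm_eq_abs, abs_of_pos hs]
  have hi3 : (inner ℝ v (A₃ - O) : ℝ) = s * ‖v‖ ^ 2 := by
    rw [hO3, inner_add_right, hvm, real_inner_smul_right, real_inner_self_eq_norm_sq]
    ring
  have h3ne : A₃ - O ≠ 0 := by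
    intro h
    rw [h, inner_zero_right] at hi3
    have := mul_pos hs (pow_pos hnv 2)
    linarith
  have hrpos : 0 < ‖A₃ - O‖ := norm_pos_iff.mpr h3ne
  have hr2 : ‖A₂ - O‖ = ‖A₃ - O‖ := by
    have hsq : (inner ℝ (A₂ - O) (A₂ - O) : ℝ) = inner ℝ (A₃ - O) (A₃ - O) := by
      rw [hO2, hO3]
      have hmv : (inner ℝ m v : ℝ) = 0 := by rw [real_inner_comm]; exact hvm
      simp only [inner_add_left, inner_add_right, inner_neg_left, inner_neg_right,
        real_inner_smul_left, real_inner_smul_right, hvm, hmv]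
      ring
    rw [real_inner_self_eq_norm_mul_norm, real_inner_self_eq_norm_mul_norm] at hsq
    nlinarith [norm_nonneg (A₂ - O), norm_nonneg (A₃ - O)]
  -- the balance equation
  have hl : ‖A₁ - O‖ = t * ‖v‖ := by
    rw [hO1, norm_smul, Real.norm_eq_abs, abs_neg, abs_of_pos ht0]
  have hu1 : u O A₁ = (-(‖v‖⁻¹)) • v := by
    simp only [u]
    rw [hl, hO1, smul_smul]
    congr 1
    have : t ≠ 0 := ne_of_gt ht0
    field_simp
  have hu2 : u O A₂ = ‖A₃ - O‖⁻¹ • (-m + s • v) := by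
    simp only [u]
    rw [hr2, hO2]
  have hu3 : u O A₃ = ‖A₃ - O‖⁻¹ • (m + s • v) := by
    simp only [u]
    rw [hO3]
  have key : ((-(‖v‖⁻¹) + 2 * w * ‖A₃ - O‖⁻¹ * s) • v : EuclideanSpace ℝ (Fin 2)) = 0 := by
    rw [← hbal, hu1, hu2, hu3]
    module
  have hc : -(‖v‖⁻¹) + 2 * w * ‖A₃ - O‖⁻¹ * s = 0 := by
    rcases smul_eq_zero.mp key with h | h
    · exact h
    · exact absurd h hv0
  have hr : ‖A₃ - O‖ = 2 * w * (s * ‖v‖) := by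
    have ht0' : t ≠ 0 := ne_of_gt ht0
    have hnv' : ‖v‖ ≠ 0 := ne_of_gt hnv
    have hr0 : ‖A₃ - O‖ ≠ 0 := ne_of_gt hrpos
    field_simp at hc
    nlinarith [hc]
  -- the inner product value
  have hi : (inner ℝ (A₄ - O) (A₃ - O) : ℝ) = s ^ 2 * ‖v‖ ^ 2 := by
    rw [hO4, real_inner_smul_left, hi3]; ring
  have hmain : (inner ℝ (u O A₄) (u O A₃) : ℝ) = 1 / (2 * w) := by
    simp only [u, real_inner_smul_left, real_inner_smul_right, hi, hd, hr]
    field_simp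
  refine ⟨hmain, ?_⟩
  have hang : ∠ A₄ O A₃ = arccos (1 / (2 * w)) := by
    rw [EuclideanGeometry.angle, InnerProductGeometry.angle]
    congr 1
    rw [show (A₄ -ᵥ O : EuclideanSpace ℝ (Fin 2)) = A₄ - O from rfl,
      show (A₃ -ᵥ O : EuclideanSpace ℝ (Fin 2)) = A₃ - O from rfl, hi, hd, hr]
    field_simp
  rw [hang]
  have h01 : (0:ℝ) < 1 / (2 * w) := by positivity
  have hle : 1 / (2 * w) ≤ 1 := by rw [div_le_one (by linarith)]; linarith
  have hcos : 1 / (2 * w ^ 2) - 1 = Real.cos (2 * arccos (1 / (2 * w))) := by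
    rw [Real.cos_two_mul, Real.cos_arccos (by linarith) hle]
    field_simp
  rw [hcos, Real.arccos_cos (by have := Real.arccos_nonneg (1 / (2 * w)); linarith) ?_]
  · ring
  · have := Real.arccos_le_pi_div_two.mpr h01.le
    linarith
end

section
/- Under the hypotheses of the energy identity (i.e., $m_0\ddot{x} = 2w_2\cos\phi - 1$, $x = a\cos\phi_0 - a\sin\phi_0\cot\phi$, $x(0)=0$, $\dot{x}(0)=0$, $\phi(0)=\phi_0$, $0 < \phi < \pi/2$), if at time $t_0$ the angle satisfies $\phi(t_0) = \theta^*$ where $\cos\theta^* = 1/(2w_2)$ and $\phi_0 < \theta^*$ (so that $2aw_2 - x(t_0) - 2aw_2\sin\phi_0/\sin\theta^* > 0$), then the speed at $t_0$ is $|\dot{x}(t_0)| = \sqrt{\frac{2}{m_0}\left(2aw_2 - x(t_0) - \frac{2aw_2\sin\phi_0}{\sin\theta^*}\right)}$, and in particular $\dot{x}(t_0) \ne 0$. -/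
/-!
The quantity `m₀ ẋ² / 2 + x + 2 a w₂ sin φ₀ / sin φ` is conserved along the motion: differentiating
`x = a cos φ₀ - a sin φ₀ cot φ` gives `ẋ = a sin φ₀ φ̇ / sin² φ`, and with this the equation of motion
makes the derivative of the energy vanish. At time `0` the energy equals `2 a w₂`, so at time `t₀`
the kinetic energy is `2 a w₂ - x(t₀) - 2 a w₂ sin φ₀ / sin θ`, which is positive by hypothesis.
-/

open Real

theorem hasDerivAt_const_sub_mul_cos_div_sin {φ : ℝ → ℝ} {φ' t : ℝ} (c b : ℝ)
    (hφ : HasDerivAt φ φ' t) (hs : sin (φ t) ≠ 0) :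
    HasDerivAt (fun s => c - b * (cos (φ s) / sin (φ s))) (b * φ' / sin (φ t) ^ 2) t := by
  have hcot := (hφ.cos).div hφ.sin hs
  refine ((hcot.const_mul b).const_sub c).congr_deriv ?_
  field_simp
  linear_combination b * φ' * sin_sq_add_cos_sq (φ t)

noncomputable def energy (m k b : ℝ) (x φ : ℝ → ℝ) (t : ℝ) : ℝ :=
  m / 2 * deriv x t ^ 2 + x t + k * b / sin (φ t)

theorem hasDerivAt_energy {m k b t φ' x'' : ℝ} {x φ : ℝ → ℝ}
    (hφ : HasDerivAt φ φ' t) (hs : sin (φ t) ≠ 0)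
    (hx : HasDerivAt x (b * φ' / sin (φ t) ^ 2) t) (hx' : HasDerivAt (deriv x) x'' t)
    (hODE : m * x'' = k * cos (φ t) - 1) :
    HasDerivAt (energy m k b x φ) 0 t := by
  have hpot : HasDerivAt (fun s => k * b / sin (φ s))
      (-(k * b * (cos (φ t) * φ')) / sin (φ t) ^ 2) t :=
    (hasDerivAt_const t (k * b)).div hφ.sin hs |>.congr_deriv (by ring)
  refine (((hx'.pow 2).const_mul (m / 2)).add hx |>.add hpot).congr_deriv ?_
  rw [hx.deriv, Nat.cast_ofNat, Nat.add_one_sub_one, pow_one]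
  field_simp
  linear_combination b * φ' * hODE

theorem abs_eq_sqrt_of_half_mul_sq_eq {m v E : ℝ} (hm : 0 < m) (hE : m / 2 * v ^ 2 = E) :
    |v| = √(2 / m * E) := by
  rw [← sqrt_sq_eq_abs, ← hE]
  field_simp

theorem speed_at_fermat_point_general
    (a φ₀ w₂ m₀ θ t₀ : ℝ) (x φ : ℝ → ℝ)
    (hm₀ : 0 < m₀)
    (hφdiff : Differentiable ℝ φ)
    (hx'diff : Differentiable ℝ (deriv x))
    (hx : ∀ t, x t = a * cos φ₀ - a * sin φ₀ * (cos (φ t) / sin (φ t)))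
    (hφrange : ∀ t, 0 < φ t ∧ φ t < π / 2)
    (hx0 : x 0 = 0) (hx'0 : deriv x 0 = 0) (hφ0 : φ 0 = φ₀)
    (hODE : ∀ t, m₀ * deriv (deriv x) t = 2 * w₂ * cos (φ t) - 1)
    (ht₀ : φ t₀ = θ)
    (hpos : 0 < 2 * a * w₂ - x t₀ - 2 * a * w₂ * (sin φ₀ / sin θ)) :
    |deriv x t₀| =
      Real.sqrt (2 / m₀ * (2 * a * w₂ - x t₀ - 2 * a * w₂ * (sin φ₀ / sin θ))) ∧
    deriv x t₀ ≠ 0 := by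
  have hsin : ∀ t, sin (φ t) ≠ 0 := fun t =>
    (sin_pos_of_pos_of_lt_pi (hφrange t).1 (by linarith [(hφrange t).2, pi_pos])).ne'
  have hvel : ∀ t, HasDerivAt x (a * sin φ₀ * deriv φ t / sin (φ t) ^ 2) t := fun t => by
    rw [funext hx]
    exact hasDerivAt_const_sub_mul_cos_div_sin _ _ (hφdiff t).hasDerivAt (hsin t)
  have henergy : ∀ t, HasDerivAt (energy m₀ (2 * w₂) (a * sin φ₀) x φ) 0 t := fun t =>
    hasDerivAt_energy (hφdiff t).hasDerivAt (hsin t) (hvel t) (hx'diff t).hasDerivAt (hODE t)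
  have hcons : energy m₀ (2 * w₂) (a * sin φ₀) x φ t₀ = energy m₀ (2 * w₂) (a * sin φ₀) x φ 0 :=
    is_const_of_deriv_eq_zero (fun t => (henergy t).differentiableAt)
      (fun t => (henergy t).deriv) t₀ 0
  have hkin : m₀ / 2 * deriv x t₀ ^ 2 = 2 * a * w₂ - x t₀ - 2 * a * w₂ * (sin φ₀ / sin θ) := by
    have hsinφ₀ := hsin 0
    simp only [energy, hx0, hx'0, hφ0, ht₀] at hcons hsinφ₀
    field_simp at hcons ⊢
    linear_combination hcons
  have hspeed := abs_eq_sqrt_of_half_mul_sq_eq hm₀ hkin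
  refine ⟨hspeed, fun h0 => ?_⟩
  rw [h0, abs_zero, eq_comm, sqrt_eq_zero (by positivity)] at hspeed
  exact (mul_pos (by positivity) hpos).ne' hspeed

theorem speed_at_fermat_point
    (a φ₀ w₂ m₀ θ t₀ : ℝ) (x φ : ℝ → ℝ)
    (ha : 0 < a) (hφ₀ : 0 < φ₀) (hφ₀' : φ₀ < π / 2) (hw₂ : 0 < w₂) (hm₀ : 0 < m₀)
    (hφdiff : Differentiable ℝ φ) (hφ'diff : Differentiable ℝ (deriv φ))
    (hxdiff : Differentiable ℝ x) (hx'diff : Differentiable ℝ (deriv x))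
    (hx : ∀ t, x t = a * cos φ₀ - a * sin φ₀ * (cos (φ t) / sin (φ t)))
    (hφrange : ∀ t, 0 < φ t ∧ φ t < π / 2)
    (hx0 : x 0 = 0) (hx'0 : deriv x 0 = 0) (hφ0 : φ 0 = φ₀)
    (hODE : ∀ t, m₀ * deriv (deriv x) t = 2 * w₂ * cos (φ t) - 1)
    (hθ : cos θ = 1 / (2 * w₂)) (hφ₀θ : φ₀ < θ)
    (ht₀ : φ t₀ = θ)
    (hpos : 0 < 2 * a * w₂ - x t₀ - 2 * a * w₂ * (sin φ₀ / sin θ)) :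
    |deriv x t₀| =
      Real.sqrt (2 / m₀ * (2 * a * w₂ - x t₀ - 2 * a * w₂ * (sin φ₀ / sin θ))) ∧
    deriv x t₀ ≠ 0 :=
  speed_at_fermat_point_general a φ₀ w₂ m₀ θ t₀ x φ hm₀ hφdiff hx'diff hx hφrange hx0 hx'0 hφ0 hODE
    ht₀ hpos
end

section
/- In an isosceles triangle $A_1 A_2 A_3$ with $\|A_1 A_2\| = \|A_1 A_3\| = a$, apex half-angle $\phi_0 = \angle A_4 A_1 A_3 < \theta^*$ where $\cos\theta^* = 1/(2w_2)$, $w_2 > 1/2$, and $O$ the point on the altitude $A_1 A_4$ with $\angle A_4 O A_3 = \theta^*$, the quantity $W = 2w_2(a - \|A_2 - O\|) - \|A_1 - O\|$ satisfies $W = 2w_2 a\left(1 - \frac{\sin\phi_0}{\sin\theta^*}\right) - \|A_1 - O\|$, and $W \ne 0$ whenever $\phi_0 > 0$. -/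
open Real EuclideanGeometry
open scoped RealInnerProductSpace

theorem work_along_path
    (A₁ A₂ A₃ A₄ O : EuclideanSpace ℝ (Fin 2)) (a w₂ θ φ₀ W : ℝ)
    (ha : 0 < a) (hw₂ : 1 / 2 < w₂)
    (hnc : ¬ Collinear ℝ ({A₁, A₂, A₃} : Set (EuclideanSpace ℝ (Fin 2))))
    (h12 : ‖A₁ - A₂‖ = a) (h13 : ‖A₁ - A₃‖ = a)
    (hA₄ : A₄ = midpoint ℝ A₂ A₃)
    (hθ : Real.cos θ = 1 / (2 * w₂)) (hθrange : 0 < θ ∧ θ < π / 2)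
    (hφ₀ : φ₀ = ∠ A₄ A₁ A₃) (hφ₀θ : φ₀ < θ)
    (hO : O ∈ segment ℝ A₁ A₄)
    (hangle : ∠ A₄ O A₃ = θ)
    (hW : W = 2 * w₂ * (a - ‖A₂ - O‖) - ‖A₁ - O‖) :
    W = 2 * w₂ * a * (1 - Real.sin φ₀ / Real.sin θ) - ‖A₁ - O‖ ∧
      (0 < φ₀ → W ≠ 0) := by
  obtain ⟨hθ0, hθπ⟩ := hθrange
  have hpi := Real.pi_pos
  have hsθ : 0 < Real.sin θ := Real.sin_pos_of_pos_of_lt_pi hθ0 (by linarith)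
  have hcθ : 0 < Real.cos θ := Real.cos_pos_of_mem_Ioo ⟨by linarith, hθπ⟩
  have hw2 : 0 < w₂ := by linarith
  -- midpoint facts
  have hmid2 : dist A₂ A₄ = dist A₃ A₄ := by
    rw [hA₄, dist_comm A₂, dist_comm A₃, dist_midpoint_left, dist_midpoint_right]
  -- kite orthogonality
  have hkite : @inner ℝ _ _ (A₁ - A₄) (A₃ - A₂) = 0 := by
    have h := EuclideanGeometry.inner_vsub_vsub_of_dist_eq_of_dist_eq
      (c₁ := A₄) (c₂ := A₁) (p₁ := A₂) (p₂ := A₃) hmid2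
      (by rw [dist_comm A₂ A₁, dist_comm A₃ A₁, dist_eq_norm, dist_eq_norm, h12, h13])
    simpa using h
  have h34 : A₃ - A₄ = (2:ℝ)⁻¹ • (A₃ - A₂) := by
    rw [hA₄, midpoint_eq_smul_add, invOf_eq_inv]
    module
  have h24 : A₂ - A₄ = -(A₃ - A₄) := by
    rw [h34, hA₄, midpoint_eq_smul_add, invOf_eq_inv]
    module
  have hP1 : @inner ℝ _ _ (A₃ - A₄) (A₁ - A₄) = 0 := by
    rw [h34, real_inner_smul_left, real_inner_comm, hkite, mul_zero]
  -- O on the altitude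
  obtain ⟨t, _, hOeq⟩ : ∃ t ∈ Set.Icc (0:ℝ) 1, A₁ + t • (A₄ - A₁) = O := by
    rw [segment_eq_image'] at hO
    obtain ⟨t, ht, h⟩ := hO
    exact ⟨t, ht, h⟩
  have hOA : O - A₄ = (1 - t) • (A₁ - A₄) := by
    rw [← hOeq]; module
  have hP2 : @inner ℝ _ _ (A₃ - A₄) (O - A₄) = 0 := by
    rw [hOA, real_inner_smul_right, hP1, mul_zero]
  have hP2' : @inner ℝ _ _ (A₂ - A₄) (O - A₄) = 0 := by
    rw [h24, inner_neg_left, hP2, neg_zero]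
  -- angles
  have hang1 : ∠ A₃ A₄ A₁ = π / 2 := by
    rw [EuclideanGeometry.angle, show A₃ -ᵥ A₄ = A₃ - A₄ from rfl,
      show A₁ -ᵥ A₄ = A₁ - A₄ from rfl]
    exact (InnerProductGeometry.inner_eq_zero_iff_angle_eq_pi_div_two _ _).1 hP1
  have hang2 : ∠ A₃ A₄ O = π / 2 := by
    rw [EuclideanGeometry.angle, show A₃ -ᵥ A₄ = A₃ - A₄ from rfl,
      show O -ᵥ A₄ = O - A₄ from rfl]
    exact (InnerProductGeometry.inner_eq_zero_iff_angle_eq_pi_div_two _ _).1 hP2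
  have hang2' : ∠ A₂ A₄ O = π / 2 := by
    rw [EuclideanGeometry.angle, show A₂ -ᵥ A₄ = A₂ - A₄ from rfl,
      show O -ᵥ A₄ = O - A₄ from rfl]
    exact (InnerProductGeometry.inner_eq_zero_iff_angle_eq_pi_div_two _ _).1 hP2'
  -- distances
  have hd31 : dist A₃ A₁ = a := by rw [dist_eq_norm, ← norm_sub_rev, h13]
  have hm : dist A₃ A₄ = a * Real.sin φ₀ := by
    have h := EuclideanGeometry.sin_angle_mul_dist_of_angle_eq_pi_div_two hang1
    rw [hd31, ← hφ₀] at h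
    rw [← h]; ring
  have hd3O : dist A₃ O = a * Real.sin φ₀ / Real.sin θ := by
    have h := EuclideanGeometry.sin_angle_mul_dist_of_angle_eq_pi_div_two hang2
    rw [hangle, hm] at h
    field_simp [ne_of_gt hsθ]
    linarith [h]
  have hdOA4 : dist O A₄ = Real.cos θ * (a * Real.sin φ₀ / Real.sin θ) := by
    have h := EuclideanGeometry.cos_angle_mul_dist_of_angle_eq_pi_div_two hang2
    rw [hangle, hd3O] at h
    linarith [h]
  have hd1A4 : dist A₁ A₄ = a * Real.cos φ₀ := by
    have h := EuclideanGeometry.cos_angle_mul_dist_of_angle_eq_pi_div_two hang1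
    rw [hd31, ← hφ₀] at h
    rw [← h]; ring
  have hseg : dist A₁ O + dist O A₄ = dist A₁ A₄ := dist_add_dist_of_mem_segment hO
  have hd1O : dist A₁ O = a * Real.cos φ₀ - Real.cos θ * (a * Real.sin φ₀ / Real.sin θ) := by
    rw [hd1A4, hdOA4] at hseg; linarith
  -- dist A₂ O = dist A₃ O by Pythagoras
  have hpy3 := (EuclideanGeometry.dist_sq_eq_dist_sq_add_dist_sq_iff_angle_eq_pi_div_two A₃ A₄ O).2 hang2
  have hpy2 := (EuclideanGeometry.dist_sq_eq_dist_sq_add_dist_sq_iff_angle_eq_pi_div_two A₂ A₄ O).2 hang2'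
  have hd23 : dist A₂ O = dist A₃ O := by
    rw [hmid2] at hpy2
    exact (mul_self_inj dist_nonneg dist_nonneg).mp (hpy2.trans hpy3.symm)
  have hA2O : ‖A₂ - O‖ = a * Real.sin φ₀ / Real.sin θ := by
    rw [← dist_eq_norm, hd23, hd3O]
  have hA1O : ‖A₁ - O‖ = a * Real.cos φ₀ - Real.cos θ * (a * Real.sin φ₀ / Real.sin θ) := by
    rw [← dist_eq_norm, hd1O]
  constructor
  · rw [hW, hA2O]; ring
  · intro _
    have h2w : 2 * w₂ * Real.cos θ = 1 := by
      rw [hθ]; field_simp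
    have hφnn : 0 ≤ φ₀ := hφ₀ ▸ EuclideanGeometry.angle_nonneg _ _ _
    have hcoslt : Real.cos (θ - φ₀) < 1 := by
      have h := Real.cos_lt_cos_of_nonneg_of_le_pi (x := 0) (y := θ - φ₀) le_rfl
        (by linarith) (by linarith)
      rwa [Real.cos_zero] at h
    have hpyth := Real.sin_sq_add_cos_sq θ
    have key : W * (Real.sin θ * Real.cos θ) = a * Real.sin θ * (1 - Real.cos (θ - φ₀)) := by
      have hinv : Real.sin θ * (Real.sin θ)⁻¹ = 1 := mul_inv_cancel₀ (ne_of_gt hsθ)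
      rw [hW, hA2O, hA1O, Real.cos_sub]
      linear_combination ((a - a * Real.sin φ₀ / Real.sin θ) * Real.sin θ) * h2w +
        (a * Real.sin φ₀) * hpyth +
        (a * Real.sin φ₀ * (Real.cos θ ^ 2 - 1)) * hinv
    have hpos : 0 < W * (Real.sin θ * Real.cos θ) := by
      rw [key]
      have : 0 < 1 - Real.cos (θ - φ₀) := by linarith
      positivity
    have hk : 0 < Real.sin θ * Real.cos θ := mul_pos hsθ hcθ
    have hW0 : 0 < W := by
      have hWeq : W = W * (Real.sin θ * Real.cos θ) / (Real.sin θ * Real.cos θ) := by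
        field_simp
      rw [hWeq]
      exact div_pos hpos hk
    exact ne_of_gt hW0
end
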